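/- log F(n) = (n/2) · log n · (1 + o(1)); more precisely, log F(n) = (n/2) log n − ((1 + ln 2)/2) · n · (1 + o(1)), where F(n) is the maximum of G(k, ℓ, m) over triples with k + ℓ = n. -/

import Mathlib

/-- `G k l m = k·C(l,m)·C(k-1,l-m)·(l-m)!`. -/
def G (k l m : ℕ) : ℕ := k * l.choose m * (k - 1).choose (l - m) * (l - m).factorial

/-- `F n` is the maximum of `G k l m` over admissible triples with `k + l = n`:
`k ≥ 1`, `m ≤ l`, and `m ≥ l - k + 1` (stated as `l + 1 ≤ m + k`). -/
def F (n : ℕ) : ℕ :=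
  ((Finset.range (n + 1)) ×ˢ (Finset.range (n + 1)) ×ˢ (Finset.range (n + 1))).sup
    fun t => if t.1 + t.2.1 = n ∧ 1 ≤ t.1 ∧ t.2.2 ≤ t.2.1 ∧ t.2.1 + 1 ≤ t.2.2 + t.1
      then G t.1 t.2.1 t.2.2 else 0

/-!
Lower bound: the admissible triple `(⌈n/2⌉, ⌊n/2⌋, 1)` has `G ≥ ⌈n/2⌉!`, and since
`log k! ≥ k log k - k`, which increases for `k ≥ 1`, this is at least
`(n/2) log (n/2) - n/2`, exactly the main term.

Upper bound: with `j = l - m`, Vandermonde's identity gives `G ≤ n · C(n, 2j) · j!`, and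
`C(n, 2j) ≤ n^t / t!` for `t = n - 2j`. After the Stirling bounds on `t!` and `j!`, the excess
over the main term splits into `j log (2j/n) ≤ 0` and `t (log n / 2 + (3 + log 2)/2 - log t)`,
and `max_t t (A - log t) = exp (A - 1)` bounds the latter by `√(2e n)`. Hence the error term is
`O(√n)`, which is `o(n)`.
-/

open Real Filter Topology
open scoped Nat

theorem mul_log_sub_self_le_log_factorial (n : ℕ) : n * log n - n ≤ log n ! := by
  rcases n.eq_zero_or_pos with rfl | hn
  · simp
  have h := pow_div_factorial_le_exp (n : ℝ) n.cast_nonneg n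
  rw [div_le_iff₀ (by positivity), ← log_le_log_iff (by positivity) (by positivity),
    log_pow, log_mul (by positivity) (by positivity), log_exp] at h
  linarith

theorem log_factorial_le (n : ℕ) : log n ! ≤ n * log n - n + log n / 2 + 1 := by
  rcases n.eq_zero_or_pos with rfl | hn
  · simp
  have hseq : Stirling.stirlingSeq n ≤ exp 1 / √2 := by
    obtain ⟨m, rfl⟩ := Nat.exists_eq_add_one_of_ne_zero hn.ne'
    simpa using Stirling.stirlingSeq'_antitone (Nat.zero_le m)
  have hfac : (n ! : ℝ) ≤ exp 1 * √n * (n / exp 1) ^ n := by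
    rw [Stirling.stirlingSeq, div_le_iff₀ (by positivity)] at hseq
    calc (n ! : ℝ) ≤ exp 1 / √2 * (√(2 * n) * (n / exp 1) ^ n) := hseq
      _ = exp 1 * √n * (n / exp 1) ^ n := by
        rw [sqrt_mul zero_le_two]; field_simp
  calc log n ! ≤ log (exp 1 * √n * (n / exp 1) ^ n) := log_le_log (by positivity) hfac
    _ = n * log n - n + log n / 2 + 1 := by
      rw [log_mul (by positivity) (by positivity), log_mul (by positivity) (by positivity),
        log_exp, log_sqrt (by positivity), log_pow, log_div (by positivity) (by positivity),
        log_exp]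
      ring

theorem mul_sub_log_le_exp (A : ℝ) {t : ℝ} (ht : 0 ≤ t) :
    t * (A - log t) ≤ exp (A - 1) := by
  rcases ht.eq_or_lt with rfl | ht
  · simp [(exp_pos _).le]
  -- `log s ≥ 1 - 1/s` at `s = t / exp (A - 1)`
  have h := one_sub_inv_le_log_of_pos (div_pos ht (exp_pos (A - 1)))
  rw [log_div ht.ne' (exp_ne_zero _), log_exp, inv_div] at h
  have := mul_le_mul_of_nonneg_left h ht.le
  rw [mul_sub, mul_div_cancel₀ _ ht.ne'] at this
  linarith

theorem mul_log_sub_self_le_of_le {x y : ℝ} (hx : 1 ≤ x) (hxy : x ≤ y) :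
    x * log x - x ≤ y * log y - y := by
  have h := mul_sub_log_le_exp (log x + 1) (by linarith : 0 ≤ y)
  rw [add_sub_cancel_right, exp_log (by linarith)] at h
  linarith [mul_nonneg (sub_nonneg.2 hxy) (log_nonneg hx)]

theorem choose_mul_choose_le_add_choose (a b j : ℕ) :
    a.choose j * b.choose j ≤ (a + b).choose (j + j) := by
  rw [Nat.add_choose_eq]
  refine Finset.single_le_sum (f := fun p : ℕ × ℕ => a.choose p.1 * b.choose p.2)
    (fun _ _ => Nat.zero_le _) (a := (j, j)) ?_
  simp

def Admissible (n k l m : ℕ) : Prop := k + l = n ∧ 1 ≤ k ∧ m ≤ l ∧ l + 1 ≤ m + k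

theorem G_le_F {n k l m : ℕ} (h : Admissible n k l m) : G k l m ≤ F n := by
  have hmem : (k, l, m) ∈
      Finset.range (n + 1) ×ˢ Finset.range (n + 1) ×ˢ Finset.range (n + 1) := by
    obtain ⟨hn, -, hm, -⟩ := h
    simp only [Finset.mem_product, Finset.mem_range]
    omega
  unfold F
  refine le_trans (le_of_eq ?_) (Finset.le_sup hmem)
  exact (if_pos h).symm

theorem F_le {n : ℕ} {B : ℝ} (hB : 0 ≤ B)
    (h : ∀ k l m, Admissible n k l m → (G k l m : ℝ) ≤ B) : (F n : ℝ) ≤ B := by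
  suffices F n ≤ ⌊B⌋₊ from (Nat.cast_le.2 this).trans (Nat.floor_le hB)
  refine Finset.sup_le fun t _ => ?_
  split_ifs with ht
  · exact Nat.le_floor (h _ _ _ ht)
  · exact Nat.zero_le _

theorem F_pos {n : ℕ} (hn : 0 < n) : 0 < F n :=
  lt_of_lt_of_le (by simpa [G] using hn) (G_le_F (show Admissible n n 0 0 by
    refine ⟨?_, ?_, ?_, ?_⟩ <;> omega))

theorem factorial_le_G_one {k l : ℕ} (hl : 1 ≤ l) (hlk : l ≤ k) (hkl : k ≤ l + 1) :
    k ! ≤ G k l 1 := by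
  have hfac : (k - 1).choose (l - 1) * (l - 1)! = (k - 1)! := by
    have := Nat.choose_mul_factorial_mul_factorial (n := k - 1) (k := l - 1) (by omega)
    have h01 : (k - 1 - (l - 1))! = 1 := Nat.factorial_eq_one.2 (by omega)
    rwa [h01, mul_one] at this
  calc k ! = 1 * (k * (k - 1)!) := by rw [one_mul, Nat.mul_factorial_pred (by omega)]
    _ ≤ l * (k * (k - 1)!) := by gcongr
    _ = G k l 1 := by rw [G, Nat.choose_one_right, ← hfac]; ring

theorem G_le_choose_mul_factorial {n k l m : ℕ} (h : Admissible n k l m) :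
    G k l m ≤ n * (n.choose (2 * (l - m)) * (l - m)!) := by
  obtain ⟨hn, hk, hm, hlk⟩ := h
  have hprod : l.choose m * (k - 1).choose (l - m) ≤ n.choose (2 * (l - m)) := by
    rw [← Nat.choose_symm hm, two_mul]
    exact (choose_mul_choose_le_add_choose l (k - 1) (l - m)).trans
      (Nat.choose_le_choose _ (by omega))
  calc G k l m = k * (l.choose m * (k - 1).choose (l - m)) * (l - m)! := by
        rw [G]; ring
    _ ≤ n * n.choose (2 * (l - m)) * (l - m)! := by gcongr; omega
    _ = _ := by ring

theorem log_choose_mul_factorial_le {n j : ℕ} (hn : 0 < n) (hj : 2 * j ≤ n) :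
    log (n.choose (2 * j) * j ! : ℕ) ≤
      n / 2 * log n - (1 + log 2) / 2 * n + exp ((1 + log 2) / 2) * √n + log n / 2 + 1 := by
  set t := n - 2 * j
  have hnt : (n : ℝ) = t + 2 * j := by norm_cast; omega
  have hnpos : (0 : ℝ) < n := Nat.cast_pos.2 hn
  have hchoose : log (n.choose (2 * j)) ≤ t * log n - log t ! := by
    rw [Nat.choose_symm_of_eq_add (by omega : n = 2 * j + t)]
    have h := log_le_log (Nat.cast_pos.2 (Nat.choose_pos (by omega)))
      (Nat.choose_le_pow_div (α := ℝ) t n)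
    rwa [log_div (by positivity) (by positivity), log_pow] at h
  have hj_log : j * log j ≤ j * (log n - log 2) ∧ log j ≤ log n := by
    rcases j.eq_zero_or_pos with rfl | hj0
    · simp [log_nonneg (Nat.one_le_cast.2 hn)]
    have hj0' : (0 : ℝ) < j := Nat.cast_pos.2 hj0
    have h2j : log 2 + log j ≤ log n := by
      rw [← log_mul two_ne_zero hj0'.ne']
      exact log_le_log (by positivity) (by linarith)
    exact ⟨mul_le_mul_of_nonneg_left (by linarith) hj0'.le, by linarith [log_nonneg one_le_two]⟩
  have ht : t * (log n / 2 + (3 + log 2) / 2 - log t) ≤ exp ((1 + log 2) / 2) * √n := by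
    have hsqrt : √n = exp (log n / 2) := by
      rw [sqrt_eq_rpow, rpow_def_of_pos hnpos]; ring_nf
    convert mul_sub_log_le_exp (log n / 2 + (3 + log 2) / 2) t.cast_nonneg using 1
    rw [hsqrt, ← exp_add]; ring_nf
  have hnlog : (n : ℝ) * log n = t * log n + 2 * (j * log n) := by rw [hnt]; ring
  have hnlog2 : (n : ℝ) * log 2 = t * log 2 + 2 * (j * log 2) := by rw [hnt]; ring
  push_cast
  rw [log_mul (by exact_mod_cast (Nat.choose_pos hj).ne') (by positivity)]
  linarith [mul_log_sub_self_le_log_factorial t, log_factorial_le j, hj_log.1, hj_log.2]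

theorem log_F_le {n : ℕ} (hn : 0 < n) :
    log (F n) ≤ n / 2 * log n - (1 + log 2) / 2 * n + (exp ((1 + log 2) / 2) + 4) * √n := by
  have hsqrt : 1 ≤ √n := one_le_sqrt.2 (Nat.one_le_cast.2 hn)
  have hlog : log n ≤ 2 * √n := by
    have := log_le_rpow_div (n.cast_nonneg (α := ℝ)) one_half_pos
    rwa [← sqrt_eq_rpow, div_div_eq_mul_div, div_one, mul_comm] at this
  rw [log_le_iff_le_exp (Nat.cast_pos.2 (F_pos hn))]
  refine F_le (exp_pos _).le fun k l m h => ?_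
  have hj : 2 * (l - m) ≤ n := by obtain ⟨_, _, _, _⟩ := h; omega
  have hX : 0 < n.choose (2 * (l - m)) * (l - m)! :=
    Nat.mul_pos (Nat.choose_pos hj) (Nat.factorial_pos _)
  calc (G k l m : ℝ) ≤ (n * (n.choose (2 * (l - m)) * (l - m)!) : ℕ) :=
        Nat.cast_le.2 (G_le_choose_mul_factorial h)
    _ ≤ _ := by
      rw [← log_le_iff_le_exp (by positivity), Nat.cast_mul,
        log_mul (by positivity) (by positivity)]
      linarith [log_choose_mul_factorial_le hn hj]

theorem le_log_F {n : ℕ} (hn : 2 ≤ n) :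
    n / 2 * log n - (1 + log 2) / 2 * n ≤ log (F n) := by
  set k := n - n / 2
  have hk : k ! ≤ F n := (factorial_le_G_one (by omega) (by omega) (by omega)).trans
    (G_le_F (show Admissible n k (n / 2) 1 by refine ⟨?_, ?_, ?_, ?_⟩ <;> omega))
  have hnk : (n : ℝ) / 2 ≤ k := by
    rw [div_le_iff₀ two_pos]; exact_mod_cast (by omega : n ≤ k * 2)
  calc n / 2 * log n - (1 + log 2) / 2 * n = n / 2 * log (n / 2) - n / 2 := by
        rw [log_div (by positivity) two_ne_zero]; ring
    _ ≤ k * log k - k :=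
        mul_log_sub_self_le_of_le (by rw [le_div_iff₀ two_pos]; exact_mod_cast (by omega)) hnk
    _ ≤ log k ! := mul_log_sub_self_le_log_factorial k
    _ ≤ log (F n) := log_le_log (by positivity) (by exact_mod_cast hk)

/-- `log F(n) = (n/2) log n − ((1 + ln 2)/2)·n·(1 + o(1))`. -/
theorem stmt11 :
    Filter.Tendsto
      (fun n : ℕ =>
        (Real.log (F n) - (n / 2) * Real.log n + ((1 + Real.log 2) / 2) * n) / n)
      Filter.atTop (nhds 0) := by
  set c := exp ((1 + log 2) / 2) + 4
  have hc : Tendsto (fun n : ℕ => c / √n) atTop (𝓝 0) :=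
    tendsto_const_nhds.div_atTop (tendsto_sqrt_atTop.comp tendsto_natCast_atTop_atTop)
  refine tendsto_of_tendsto_of_tendsto_of_le_of_le' tendsto_const_nhds hc ?_ ?_
  · filter_upwards [eventually_ge_atTop 2] with n hn
    exact div_nonneg (by linarith [le_log_F hn]) n.cast_nonneg
  · filter_upwards [eventually_gt_atTop 0] with n hn
    have hsqrt : 0 < √n := sqrt_pos.2 (Nat.cast_pos.2 hn)
    rw [div_le_div_iff₀ (Nat.cast_pos.2 hn) hsqrt]
    calc _ ≤ c * √n * √n := mul_le_mul_of_nonneg_right (by linarith [log_F_le hn]) hsqrt.le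
      _ = c * n := by rw [mul_assoc, mul_self_sqrt n.cast_nonneg]
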